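/- Let t ∈ F⁺ have no finite n-ary representation with σ_t(k) = ±1 for all k. Then C_k ∩ (C_k + t) is a disjoint union of exactly μ_t(k) closed intervals, each of length ℓ_k, where ℓ_k = n^{-k} − (t − ⌊t⌋_k) if σ_t(k) = 1 and ℓ_k = t − ⌊t⌋_k if σ_t(k) = −1. -/

import Mathlib

open MeasureTheory Filter
open scoped ENNReal Topology Pointwise Classical

noncomputable section

/-- The deleted digits Cantor set `C_{n,D}`. -/
def cantorC (n : ℕ) (D : Finset ℤ) : Set ℝ :=
  {x | ∃ f : ℕ → ℤ, (∀ k, f k ∈ D) ∧ HasSum (fun k => (f k : ℝ) / (n : ℝ) ^ (k + 1)) x}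

/-- The `k`-th stage `C_k` of the construction of `C_{n,D}`. -/
def cantorStage (n : ℕ) (D : Finset ℤ) (k : ℕ) : Set ℝ :=
  {x | ∃ f : ℕ → ℤ, (∀ j, j < k → f j ∈ D) ∧
    ∃ r ∈ Set.Icc (0 : ℝ) (1 / (n : ℝ) ^ k),
      x = (∑ j ∈ Finset.range k, (f j : ℝ) / (n : ℝ) ^ (j + 1)) + r}

/-- Translate of a set of reals. -/
def transl (S : Set ℝ) (t : ℝ) : Set ℝ := {x | ∃ y ∈ S, x = y + t}

/-- The value `0._n t_1 t_2 ⋯` of a digit sequence. -/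
def digitVal (n : ℕ) (τ : ℕ → ℕ) : ℝ := ∑' k, (τ k : ℝ) / (n : ℝ) ^ (k + 1)

/-- Truncation `⌊t⌋_k` of a digit sequence to `k` digits. -/
def truncVal (n : ℕ) (τ : ℕ → ℕ) (k : ℕ) : ℝ :=
  ∑ j ∈ Finset.range k, (τ j : ℝ) / (n : ℝ) ^ (j + 1)

/-- State function `σ_t`: `1` = interval case, `-1` = potential interval case,
`2` = simultaneous case, `0` = irrecoverable case. The digit `t_{k+1}` is `τ k`. -/
def sigmaFn (n : ℕ) (D : Finset ℤ) (τ : ℕ → ℕ) : ℕ → ℤ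
  | 0 => 1
  | k + 1 =>
    let Δ : Finset ℤ := D - D
    let h : ℤ := τ k
    if sigmaFn n D τ k = 1 then
      if h ∈ Δ ∧ h + 1 ∈ Δ then 2
      else if h ∈ Δ then 1
      else if h + 1 ∈ Δ then -1
      else 0
    else if sigmaFn n D τ k = -1 then
      if ((n : ℤ) - h ∈ Δ) ∧ ((n : ℤ) - h - 1 ∈ Δ) then 2
      else if (n : ℤ) - h ∈ Δ then 1
      else if (n : ℤ) - h - 1 ∈ Δ then -1
      else 0
    else 0

/-- Interval counting function `μ_t`:
`μ_t(k+1) = μ_t(k) · #((D − t_{k+1}) ∩ (D ∪ (D+1)))` in the interval case,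
`μ_t(k+1) = μ_t(k) · #((D − n + t_{k+1}) ∩ (D ∪ (D−1)))` in the potential interval case,
and `0` otherwise. -/
def muFn (n : ℕ) (D : Finset ℤ) (τ : ℕ → ℕ) : ℕ → ℕ
  | 0 => 1
  | k + 1 =>
    if sigmaFn n D τ k = 1 then
      muFn n D τ k * (D.filter (fun d => d - (τ k : ℤ) ∈ D ∪ D.image (· + 1))).card
    else if sigmaFn n D τ k = -1 then
      muFn n D τ k * (D.filter (fun d => d - (n : ℤ) + (τ k : ℤ) ∈ D ∪ D.image (· - 1))).card
    else 0

/-- `ν_t(k) = log_m μ_t(k)`. -/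
def nuFn (n : ℕ) (D : Finset ℤ) (τ : ℕ → ℕ) (k : ℕ) : ℝ :=
  Real.logb (D.card) (muFn n D τ k)

/-- `β_t = liminf_k ν_t(k)/k`. -/
def betaFn (n : ℕ) (D : Finset ℤ) (τ : ℕ → ℕ) : ℝ :=
  Filter.liminf (fun k : ℕ => nuFn n D τ k / k) Filter.atTop
def Sfin (n : ℕ) (D : Finset ℤ) : ℕ → Finset ℤ
  | 0 => {0}
  | k + 1 => ((Sfin n D k) ×ˢ D).image fun p => (n : ℤ) * p.1 + p.2

def Tval (n : ℕ) (τ : ℕ → ℕ) : ℕ → ℤ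
  | 0 => 0
  | k + 1 => (n : ℤ) * Tval n τ k + τ k

def Afin (n : ℕ) (D : Finset ℤ) (τ : ℕ → ℕ) (k : ℕ) : Finset ℤ :=
  (Sfin n D k).filter fun N => N - Tval n τ k ∈ Sfin n D k

def Bfin (n : ℕ) (D : Finset ℤ) (τ : ℕ → ℕ) (k : ℕ) : Finset ℤ :=
  (Sfin n D k).filter fun N => N - Tval n τ k - 1 ∈ Sfin n D k

lemma mem_Sfin_succ {n : ℕ} {D : Finset ℤ} {k : ℕ} {N' : ℤ} :
    N' ∈ Sfin n D (k + 1) ↔ ∃ N ∈ Sfin n D k, ∃ d ∈ D, N' = (n : ℤ) * N + d := by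
  simp only [Sfin, Finset.mem_image, Finset.mem_product, Prod.exists]
  constructor
  · rintro ⟨a, b, ⟨ha, hb⟩, rfl⟩; exact ⟨a, ha, b, hb, rfl⟩
  · rintro ⟨a, ha, b, hb, rfl⟩; exact ⟨a, b, ⟨ha, hb⟩, rfl⟩

lemma int_q {n q z : ℤ} (hn : 0 < n) (h : z = n * q) (h1 : -n < z) (h2 : z < 2 * n) :
    q = 0 ∨ q = 1 := by
  rcases le_or_gt q (-1) with hq | hq
  · exfalso; nlinarith
  rcases le_or_gt 2 q with hq' | hq'
  · exfalso; nlinarith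
  omega

lemma mem_shift_succ {n : ℕ} {D : Finset ℤ} (hn : 0 < n)
    (hD : ∀ d ∈ D, 0 ≤ d ∧ d < (n : ℤ)) {k : ℕ} {v w : ℤ} (hw0 : 0 ≤ w) (hwn : w ≤ n)
    {N' : ℤ} :
    (N' ∈ Sfin n D (k + 1) ∧ N' - ((n : ℤ) * v + w) ∈ Sfin n D (k + 1)) ↔
      ∃ N ∈ Sfin n D k, ∃ d ∈ D, N' = (n : ℤ) * N + d ∧
        ((N - v ∈ Sfin n D k ∧ d - w ∈ D) ∨ (N - v - 1 ∈ Sfin n D k ∧ d - w + n ∈ D)) := by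
  have hnz : (0 : ℤ) < n := by exact_mod_cast hn
  constructor
  · rintro ⟨h1, h2⟩
    obtain ⟨N, hN, d, hd, rfl⟩ := mem_Sfin_succ.mp h1
    obtain ⟨M, hM, e, he, hMe⟩ := mem_Sfin_succ.mp h2
    obtain ⟨hd0, hdn⟩ := hD d hd
    obtain ⟨he0, hen⟩ := hD e he
    have hz : e - d + w = (n : ℤ) * (N - v - M) := by linear_combination -hMe
    have hq := int_q hnz hz (by linarith) (by linarith)
    refine ⟨N, hN, d, hd, rfl, ?_⟩
    rcases hq with hq | hq
    · left
      have hM' : M = N - v := by omega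
      have he' : e = d - w := by
        have : e - d + w = 0 := by rw [hz, hq, mul_zero]
        omega
      exact ⟨hM' ▸ hM, he' ▸ he⟩
    · right
      have hM' : M = N - v - 1 := by omega
      have he' : e = d - w + n := by
        have : e - d + w = n := by rw [hz, hq, mul_one]
        omega
      exact ⟨hM' ▸ hM, he' ▸ he⟩
  · rintro ⟨N, hN, d, hd, rfl, h | h⟩
    · refine ⟨mem_Sfin_succ.mpr ⟨N, hN, d, hd, rfl⟩,
        mem_Sfin_succ.mpr ⟨N - v, h.1, d - w, h.2, by ring⟩⟩
    · refine ⟨mem_Sfin_succ.mpr ⟨N, hN, d, hd, rfl⟩,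
        mem_Sfin_succ.mpr ⟨N - v - 1, h.1, d - w + n, h.2, by ring⟩⟩

section Succ
variable {n : ℕ} {D : Finset ℤ} {τ : ℕ → ℕ} {k : ℕ}

lemma Afin_succ (hn : 0 < n) (hD : ∀ d ∈ D, 0 ≤ d ∧ d < (n : ℤ)) (hτk : τ k < n) {N' : ℤ} :
    N' ∈ Afin n D τ (k + 1) ↔
      ∃ N d, N' = (n : ℤ) * N + d ∧ d ∈ D ∧
        ((N ∈ Afin n D τ k ∧ d - (τ k : ℤ) ∈ D) ∨
         (N ∈ Bfin n D τ k ∧ d - (τ k : ℤ) + n ∈ D)) := by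
  have hT : Tval n τ (k + 1) = (n : ℤ) * Tval n τ k + (τ k : ℤ) := rfl
  rw [Afin, Finset.mem_filter, hT]
  rw [mem_shift_succ hn hD (by positivity) (by exact_mod_cast hτk.le)]
  simp only [Afin, Bfin, Finset.mem_filter]
  constructor
  · rintro ⟨N, hN, d, hd, rfl, h | h⟩
    · exact ⟨N, d, rfl, hd, Or.inl ⟨⟨hN, h.1⟩, h.2⟩⟩
    · exact ⟨N, d, rfl, hd, Or.inr ⟨⟨hN, h.1⟩, h.2⟩⟩
  · rintro ⟨N, d, rfl, hd, h | h⟩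
    · exact ⟨N, h.1.1, d, hd, rfl, Or.inl ⟨h.1.2, h.2⟩⟩
    · exact ⟨N, h.1.1, d, hd, rfl, Or.inr ⟨h.1.2, h.2⟩⟩

lemma Bfin_succ (hn : 0 < n) (hD : ∀ d ∈ D, 0 ≤ d ∧ d < (n : ℤ)) (hτk : τ k < n) {N' : ℤ} :
    N' ∈ Bfin n D τ (k + 1) ↔
      ∃ N d, N' = (n : ℤ) * N + d ∧ d ∈ D ∧
        ((N ∈ Afin n D τ k ∧ d - ((τ k : ℤ) + 1) ∈ D) ∨
         (N ∈ Bfin n D τ k ∧ d - ((τ k : ℤ) + 1) + n ∈ D)) := by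
  have hT : Tval n τ (k + 1) = (n : ℤ) * Tval n τ k + (τ k : ℤ) := rfl
  rw [Bfin, Finset.mem_filter, hT]
  have hre : N' - ((n : ℤ) * Tval n τ k + (τ k : ℤ)) - 1 =
      N' - ((n : ℤ) * Tval n τ k + ((τ k : ℤ) + 1)) := by ring
  rw [hre]
  rw [mem_shift_succ hn hD (by positivity) (by exact_mod_cast hτk)]
  simp only [Afin, Bfin, Finset.mem_filter]
  constructor
  · rintro ⟨N, hN, d, hd, rfl, h | h⟩
    · exact ⟨N, d, rfl, hd, Or.inl ⟨⟨hN, h.1⟩, h.2⟩⟩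
    · exact ⟨N, d, rfl, hd, Or.inr ⟨⟨hN, h.1⟩, h.2⟩⟩
  · rintro ⟨N, d, rfl, hd, h | h⟩
    · exact ⟨N, h.1.1, d, hd, rfl, Or.inl ⟨h.1.2, h.2⟩⟩
    · exact ⟨N, h.1.1, d, hd, rfl, Or.inr ⟨h.1.2, h.2⟩⟩

end Succ

section Counting
variable {n : ℕ} {D : Finset ℤ} {τ : ℕ → ℕ} {k : ℕ}

lemma sigma_pp (h1 : sigmaFn n D τ k = 1) (h2 : sigmaFn n D τ (k+1) = 1) :
    (τ k : ℤ) ∈ D - D ∧ ((τ k : ℤ) + 1 ∉ D - D) := by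
  rw [sigmaFn] at h2
  simp only [h1, if_true] at h2
  split_ifs at h2 <;> simp_all

lemma sigma_pm (h1 : sigmaFn n D τ k = 1) (h2 : sigmaFn n D τ (k+1) = -1) :
    ((τ k : ℤ) ∉ D - D) ∧ (τ k : ℤ) + 1 ∈ D - D := by
  rw [sigmaFn] at h2
  simp only [h1, if_true] at h2
  split_ifs at h2 <;> simp_all

lemma sigma_mp (h1 : sigmaFn n D τ k = -1) (h2 : sigmaFn n D τ (k+1) = 1) :
    ((n : ℤ) - (τ k : ℤ)) ∈ D - D ∧ ((n : ℤ) - (τ k : ℤ) - 1 ∉ D - D) := by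
  rw [sigmaFn] at h2
  simp only [h1] at h2
  norm_num at h2
  split_ifs at h2 <;> simp_all

lemma sigma_mm (h1 : sigmaFn n D τ k = -1) (h2 : sigmaFn n D τ (k+1) = -1) :
    ((n : ℤ) - (τ k : ℤ) ∉ D - D) ∧ ((n : ℤ) - (τ k : ℤ) - 1 ∈ D - D) := by
  rw [sigmaFn] at h2
  simp only [h1] at h2
  norm_num at h2
  split_ifs at h2 <;> simp_all


lemma card_filter_shift (D : Finset ℤ) (c : ℤ) :
    (D.filter fun d => d + c ∈ D).card = (D.filter fun d => d - c ∈ D).card := by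
  apply Finset.card_bij' (fun d _ => d + c) (fun d _ => d - c)
  · intro a ha
    simp only [Finset.mem_filter] at ha ⊢
    exact ⟨ha.2, by simpa using ha.1⟩
  · intro a ha
    simp only [Finset.mem_filter] at ha ⊢
    exact ⟨ha.2, by simpa using ha.1⟩
  · intro a _; ring
  · intro a _; ring

lemma card_image_pair (hn : 0 < n) (hD : ∀ d ∈ D, 0 ≤ d ∧ d < (n : ℤ))
    (P F : Finset ℤ) (hF : F ⊆ D) :
    ((P ×ˢ F).image fun p => (n : ℤ) * p.1 + p.2).card = P.card * F.card := by
  rw [Finset.card_image_of_injOn, Finset.card_product]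
  rintro ⟨a, b⟩ hab ⟨a', b'⟩ hab' h
  simp only [Finset.coe_product, Set.mem_prod, Finset.mem_coe] at hab hab'
  obtain ⟨hb0, hbn⟩ := hD b (hF hab.2)
  obtain ⟨hb0', hbn'⟩ := hD b' (hF hab'.2)
  have h' : (n : ℤ) * a + b = (n : ℤ) * a' + b' := h
  have hz : b - b' = (n : ℤ) * (a' - a) := by linear_combination h'
  have h0 : b - b' = 0 := by
    refine Int.eq_zero_of_abs_lt_dvd ⟨a' - a, hz⟩ ?_
    rw [abs_lt]; constructor <;> linarith
  have hnz : (n : ℤ) ≠ 0 := by exact_mod_cast hn.ne'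
  have : a = a' := by
    have h2 : (n : ℤ) * (a' - a) = 0 := by omega
    rcases mul_eq_zero.mp h2 with h3 | h3
    · exact absurd h3 hnz
    · omega
  exact Prod.ext this (by omega)

theorem counting (hn : 0 < n) (hD : ∀ d ∈ D, 0 ≤ d ∧ d < (n : ℤ)) (hτ : ∀ j, τ j < n)
    (hσ : ∀ k, sigmaFn n D τ k = 1 ∨ sigmaFn n D τ k = -1) :
    ∀ k, (sigmaFn n D τ k = 1 → (Afin n D τ k).card = muFn n D τ k ∧ Bfin n D τ k = ∅) ∧
         (sigmaFn n D τ k = -1 → (Bfin n D τ k).card = muFn n D τ k ∧ Afin n D τ k = ∅) := by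
  intro k
  induction k with
  | zero =>
    constructor
    · intro _
      constructor
      · show ((Sfin n D 0).filter fun N => N - Tval n τ 0 ∈ Sfin n D 0).card = 1
        simp [Sfin, Tval, Finset.filter_singleton]
      · show ((Sfin n D 0).filter fun N => N - Tval n τ 0 - 1 ∈ Sfin n D 0) = ∅
        simp [Sfin, Tval, Finset.filter_singleton]
    · intro h
      rw [show sigmaFn n D τ 0 = 1 from rfl] at h
      norm_num at h
  | succ k IH =>
    have hτk := hτ k
    have hτZ : (0 : ℤ) ≤ (τ k : ℤ) := by positivity
    have hτZn : (τ k : ℤ) < (n : ℤ) := by exact_mod_cast hτk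
    rcases hσ k with h1 | h1
    · -- interval case at k
      obtain ⟨hAcard, hBempty⟩ := IH.1 h1
      have hAeq : Afin n D τ (k + 1) =
          ((Afin n D τ k) ×ˢ (D.filter fun d => d - (τ k : ℤ) ∈ D)).image
            (fun p => (n : ℤ) * p.1 + p.2) := by
        ext N'
        rw [Afin_succ hn hD hτk]
        simp only [Finset.mem_image, Finset.mem_product, Finset.mem_filter, Prod.exists]
        constructor
        · rintro ⟨N, d, rfl, hd, h | h⟩
          · exact ⟨N, d, ⟨h.1, hd, h.2⟩, rfl⟩
          · rw [hBempty] at h; exact absurd h.1 (Finset.notMem_empty N)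
        · rintro ⟨N, d, ⟨hN, hd, hdD⟩, rfl⟩; exact ⟨N, d, rfl, hd, Or.inl ⟨hN, hdD⟩⟩
      have hBeq : Bfin n D τ (k + 1) =
          ((Afin n D τ k) ×ˢ (D.filter fun d => d - ((τ k : ℤ) + 1) ∈ D)).image
            (fun p => (n : ℤ) * p.1 + p.2) := by
        ext N'
        rw [Bfin_succ hn hD hτk]
        simp only [Finset.mem_image, Finset.mem_product, Finset.mem_filter, Prod.exists]
        constructor
        · rintro ⟨N, d, rfl, hd, h | h⟩
          · exact ⟨N, d, ⟨h.1, hd, h.2⟩, rfl⟩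
          · rw [hBempty] at h; exact absurd h.1 (Finset.notMem_empty N)
        · rintro ⟨N, d, ⟨hN, hd, hdD⟩, rfl⟩; exact ⟨N, d, rfl, hd, Or.inl ⟨hN, hdD⟩⟩
      have hμ : muFn n D τ (k + 1) =
          muFn n D τ k * (D.filter (fun d => d - (τ k : ℤ) ∈ D ∪ D.image (· + 1))).card := by
        rw [muFn, if_pos h1]
      constructor
      · intro h2
        obtain ⟨hτΔ, hτ1Δ⟩ := sigma_pp h1 h2
        have hfil : D.filter (fun d => d - (τ k : ℤ) ∈ D ∪ D.image (· + 1)) =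
            D.filter (fun d => d - (τ k : ℤ) ∈ D) := by
          apply Finset.filter_congr
          intro d hd
          simp only [Finset.mem_union, Finset.mem_image]
          constructor
          · rintro (h | ⟨e, he, hee⟩)
            · exact h
            · exact absurd (Finset.mem_sub.mpr ⟨d, hd, e, he, by omega⟩) hτ1Δ
          · intro h; exact Or.inl h
        constructor
        · rw [hAeq, card_image_pair hn hD _ _ (Finset.filter_subset _ _), hAcard, hμ, hfil]
        · rw [hBeq]
          have : (D.filter fun d => d - ((τ k : ℤ) + 1) ∈ D) = ∅ := by
            rw [Finset.filter_eq_empty_iff]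
            intro d hd h
            exact hτ1Δ (Finset.mem_sub.mpr ⟨d, hd, d - ((τ k : ℤ) + 1), h, by ring⟩)
          rw [this, Finset.product_empty, Finset.image_empty]
      · intro h2
        obtain ⟨hτΔ, hτ1Δ⟩ := sigma_pm h1 h2
        have hfil : D.filter (fun d => d - (τ k : ℤ) ∈ D ∪ D.image (· + 1)) =
            D.filter (fun d => d - ((τ k : ℤ) + 1) ∈ D) := by
          apply Finset.filter_congr
          intro d hd
          simp only [Finset.mem_union, Finset.mem_image]
          constructor
          · rintro (h | ⟨e, he, hee⟩)
            · exact absurd (Finset.mem_sub.mpr ⟨d, hd, d - (τ k : ℤ), h, by ring⟩) hτΔ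
            · have : d - ((τ k : ℤ) + 1) = e := by omega
              rw [this]; exact he
          · intro h; exact Or.inr ⟨d - ((τ k : ℤ) + 1), h, by ring⟩
        constructor
        · rw [hBeq, card_image_pair hn hD _ _ (Finset.filter_subset _ _), hAcard, hμ, hfil]
        · rw [hAeq]
          have : (D.filter fun d => d - (τ k : ℤ) ∈ D) = ∅ := by
            rw [Finset.filter_eq_empty_iff]
            intro d hd h
            exact hτΔ (Finset.mem_sub.mpr ⟨d, hd, d - (τ k : ℤ), h, by ring⟩)
          rw [this, Finset.product_empty, Finset.image_empty]
    · -- potential interval case at k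
      obtain ⟨hBcard, hAempty⟩ := IH.2 h1
      have hAeq : Afin n D τ (k + 1) =
          ((Bfin n D τ k) ×ˢ (D.filter fun d => d - (τ k : ℤ) + (n : ℤ) ∈ D)).image
            (fun p => (n : ℤ) * p.1 + p.2) := by
        ext N'
        rw [Afin_succ hn hD hτk]
        simp only [Finset.mem_image, Finset.mem_product, Finset.mem_filter, Prod.exists]
        constructor
        · rintro ⟨N, d, rfl, hd, h | h⟩
          · rw [hAempty] at h; exact absurd h.1 (Finset.notMem_empty N)
          · exact ⟨N, d, ⟨h.1, hd, h.2⟩, rfl⟩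
        · rintro ⟨N, d, ⟨hN, hd, hdD⟩, rfl⟩; exact ⟨N, d, rfl, hd, Or.inr ⟨hN, hdD⟩⟩
      have hBeq : Bfin n D τ (k + 1) =
          ((Bfin n D τ k) ×ˢ (D.filter fun d => d - ((τ k : ℤ) + 1) + (n : ℤ) ∈ D)).image
            (fun p => (n : ℤ) * p.1 + p.2) := by
        ext N'
        rw [Bfin_succ hn hD hτk]
        simp only [Finset.mem_image, Finset.mem_product, Finset.mem_filter, Prod.exists]
        constructor
        · rintro ⟨N, d, rfl, hd, h | h⟩
          · rw [hAempty] at h; exact absurd h.1 (Finset.notMem_empty N)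
          · exact ⟨N, d, ⟨h.1, hd, h.2⟩, rfl⟩
        · rintro ⟨N, d, ⟨hN, hd, hdD⟩, rfl⟩; exact ⟨N, d, rfl, hd, Or.inr ⟨hN, hdD⟩⟩
      have hμ : muFn n D τ (k + 1) =
          muFn n D τ k *
            (D.filter (fun d => d - (n : ℤ) + (τ k : ℤ) ∈ D ∪ D.image (· - 1))).card := by
        rw [muFn, if_neg (by rw [h1]; norm_num), if_pos h1]
      constructor
      · intro h2
        obtain ⟨hτΔ, hτ1Δ⟩ := sigma_mp h1 h2
        have hfil : D.filter (fun d => d - (n : ℤ) + (τ k : ℤ) ∈ D ∪ D.image (· - 1)) =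
            D.filter (fun d => d - ((n : ℤ) - (τ k : ℤ)) ∈ D) := by
          apply Finset.filter_congr
          intro d hd
          simp only [Finset.mem_union, Finset.mem_image]
          constructor
          · rintro (h | ⟨e, he, hee⟩)
            · have : d - ((n : ℤ) - (τ k : ℤ)) = d - (n : ℤ) + (τ k : ℤ) := by ring
              rw [this]; exact h
            · exact absurd (Finset.mem_sub.mpr ⟨d, hd, e, he, by omega⟩) hτ1Δ
          · intro h
            refine Or.inl ?_
            have : d - (n : ℤ) + (τ k : ℤ) = d - ((n : ℤ) - (τ k : ℤ)) := by ring
            rw [this]; exact h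
        have hcf : (D.filter fun d => d - (τ k : ℤ) + (n : ℤ) ∈ D).card =
            (D.filter fun d => d - ((n : ℤ) - (τ k : ℤ)) ∈ D).card := by
          have e1 : (D.filter fun d => d - (τ k : ℤ) + (n : ℤ) ∈ D) =
              (D.filter fun d => d + ((n : ℤ) - (τ k : ℤ)) ∈ D) := by
            apply Finset.filter_congr; intro d _
            have : d - (τ k : ℤ) + (n : ℤ) = d + ((n : ℤ) - (τ k : ℤ)) := by ring
            rw [this]
          rw [e1, card_filter_shift]
        constructor
        · rw [hAeq, card_image_pair hn hD _ _ (Finset.filter_subset _ _), hBcard, hμ, hfil, hcf]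
        · rw [hBeq]
          have : (D.filter fun d => d - ((τ k : ℤ) + 1) + (n : ℤ) ∈ D) = ∅ := by
            rw [Finset.filter_eq_empty_iff]
            intro d hd h
            exact hτ1Δ (Finset.mem_sub.mpr ⟨d - ((τ k : ℤ) + 1) + (n : ℤ), h, d, hd, by ring⟩)
          rw [this, Finset.product_empty, Finset.image_empty]
      · intro h2
        obtain ⟨hτΔ, hτ1Δ⟩ := sigma_mm h1 h2
        have hfil : D.filter (fun d => d - (n : ℤ) + (τ k : ℤ) ∈ D ∪ D.image (· - 1)) =
            D.filter (fun d => d - ((n : ℤ) - (τ k : ℤ) - 1) ∈ D) := by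
          apply Finset.filter_congr
          intro d hd
          simp only [Finset.mem_union, Finset.mem_image]
          constructor
          · rintro (h | ⟨e, he, hee⟩)
            · exact absurd (Finset.mem_sub.mpr ⟨d, hd, d - (n : ℤ) + (τ k : ℤ), h, by ring⟩) hτΔ
            · have : d - ((n : ℤ) - (τ k : ℤ) - 1) = e := by omega
              rw [this]; exact he
          · intro h
            exact Or.inr ⟨d - ((n : ℤ) - (τ k : ℤ) - 1), h, by ring⟩
        have hcf : (D.filter fun d => d - ((τ k : ℤ) + 1) + (n : ℤ) ∈ D).card =
            (D.filter fun d => d - ((n : ℤ) - (τ k : ℤ) - 1) ∈ D).card := by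
          have e1 : (D.filter fun d => d - ((τ k : ℤ) + 1) + (n : ℤ) ∈ D) =
              (D.filter fun d => d + ((n : ℤ) - (τ k : ℤ) - 1) ∈ D) := by
            apply Finset.filter_congr; intro d _
            have : d - ((τ k : ℤ) + 1) + (n : ℤ) = d + ((n : ℤ) - (τ k : ℤ) - 1) := by ring
            rw [this]
          rw [e1, card_filter_shift]
        constructor
        · rw [hBeq, card_image_pair hn hD _ _ (Finset.filter_subset _ _), hBcard, hμ, hfil, hcf]
        · rw [hAeq]
          have : (D.filter fun d => d - (τ k : ℤ) + (n : ℤ) ∈ D) = ∅ := by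
            rw [Finset.filter_eq_empty_iff]
            intro d hd h
            exact hτΔ (Finset.mem_sub.mpr ⟨d - (τ k : ℤ) + (n : ℤ), h, d, hd, by ring⟩)
          rw [this, Finset.product_empty, Finset.image_empty]

end Counting

lemma truncVal_eq {n : ℕ} (hn : 0 < n) (τ : ℕ → ℕ) (k : ℕ) :
    truncVal n τ k = (Tval n τ k : ℝ) / (n : ℝ) ^ k := by
  have hn0 : (n : ℝ) ≠ 0 := by positivity
  induction k with
  | zero => simp [truncVal, Tval]
  | succ k ih =>
    rw [truncVal, Finset.sum_range_succ, ← truncVal, ih, Tval]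
    push_cast
    field_simp
    ring

lemma sum_val_eq {n : ℕ} (hn : 0 < n) (f : ℕ → ℤ) (k : ℕ) :
    ((∑ j ∈ Finset.range k, f j * (n : ℤ) ^ (k - 1 - j) : ℤ) : ℝ) / (n : ℝ) ^ k =
      ∑ j ∈ Finset.range k, (f j : ℝ) / (n : ℝ) ^ (j + 1) := by
  have hn0 : (n : ℝ) ≠ 0 := by positivity
  push_cast
  rw [Finset.sum_div]
  apply Finset.sum_congr rfl
  intro j hj
  have hj' : j < k := Finset.mem_range.mp hj
  have hpow : (n : ℝ) ^ k = (n : ℝ) ^ (k - 1 - j) * (n : ℝ) ^ (j + 1) := by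
    rw [← pow_add]; congr 1; omega
  rw [hpow, mul_comm ((f j : ℝ))]
  rw [mul_div_mul_left _ _ (by positivity : (n : ℝ) ^ (k - 1 - j) ≠ 0)]

lemma sum_mem_Sfin {n : ℕ} {D : Finset ℤ} {k : ℕ} {f : ℕ → ℤ} (hf : ∀ j, j < k → f j ∈ D) :
    ∑ j ∈ Finset.range k, f j * (n : ℤ) ^ (k - 1 - j) ∈ Sfin n D k := by
  induction k with
  | zero => simp [Sfin]
  | succ k ih =>
    rw [Finset.sum_range_succ]
    have hsum : ∀ j ∈ Finset.range k, f j * (n : ℤ) ^ (k + 1 - 1 - j) =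
        (n : ℤ) * (f j * (n : ℤ) ^ (k - 1 - j)) := by
      intro j hj
      have : j < k := Finset.mem_range.mp hj
      have : k + 1 - 1 - j = (k - 1 - j) + 1 := by omega
      rw [this, pow_succ]; ring
    rw [Finset.sum_congr rfl hsum, ← Finset.mul_sum]
    have h1 : k + 1 - 1 - k = 0 := by omega
    rw [h1, pow_zero, mul_one]
    exact mem_Sfin_succ.mpr ⟨_, ih (fun j hj => hf j (by omega)), f k, hf k (by omega), rfl⟩

lemma Sfin_rep {n : ℕ} {D : Finset ℤ} {k : ℕ} {N : ℤ} (hN : N ∈ Sfin n D k) :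
    ∃ f : ℕ → ℤ, (∀ j, j < k → f j ∈ D) ∧
      N = ∑ j ∈ Finset.range k, f j * (n : ℤ) ^ (k - 1 - j) := by
  induction k generalizing N with
  | zero =>
    simp only [Sfin, Finset.mem_singleton] at hN
    exact ⟨fun _ => 0, fun j hj => absurd hj (by omega), by simp [hN]⟩
  | succ k ih =>
    obtain ⟨M, hM, d, hd, rfl⟩ := mem_Sfin_succ.mp hN
    obtain ⟨f, hf, rfl⟩ := ih hM
    refine ⟨Function.update f k d, fun j hj => ?_, ?_⟩
    · rcases eq_or_ne j k with rfl | hne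
      · simpa using hd
      · rw [Function.update_of_ne hne]; exact hf j (by omega)
    · rw [Finset.sum_range_succ]
      have h1 : k + 1 - 1 - k = 0 := by omega
      rw [h1, pow_zero, mul_one, Function.update_self]
      congr 1
      rw [Finset.mul_sum]
      apply Finset.sum_congr rfl
      intro j hj
      have hjk : j < k := Finset.mem_range.mp hj
      rw [Function.update_of_ne (by omega)]
      have : k + 1 - 1 - j = (k - 1 - j) + 1 := by omega
      rw [this, pow_succ]; ring

lemma stage_mem_iff {n : ℕ} (hn : 0 < n) {D : Finset ℤ} {k : ℕ} {x : ℝ} :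
    x ∈ cantorStage n D k ↔ ∃ N ∈ Sfin n D k,
      (N : ℝ) / (n : ℝ) ^ k ≤ x ∧ x ≤ (N : ℝ) / (n : ℝ) ^ k + 1 / (n : ℝ) ^ k := by
  constructor
  · rintro ⟨f, hf, r, ⟨hr0, hr1⟩, rfl⟩
    refine ⟨∑ j ∈ Finset.range k, f j * (n : ℤ) ^ (k - 1 - j), sum_mem_Sfin hf, ?_, ?_⟩ <;>
      rw [sum_val_eq hn] <;> linarith
  · rintro ⟨N, hN, h1, h2⟩
    obtain ⟨f, hf, rfl⟩ := Sfin_rep hN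
    exact ⟨f, hf, x - (∑ j ∈ Finset.range k, (f j : ℝ) / (n : ℝ) ^ (j + 1)),
      ⟨by rw [← sum_val_eq hn]; linarith, by rw [← sum_val_eq hn]; linarith⟩, by ring⟩

/-- `C_k ∩ (C_k + t)` is a disjoint union of exactly `μ_t(k)` closed
intervals, each of length `ℓ_k`, where `ℓ_k = n^{-k} − (t − ⌊t⌋_k)` if `σ_t(k) = 1` and
`ℓ_k = t − ⌊t⌋_k` if `σ_t(k) = −1`. -/
theorem stage_intersection_structure (n : ℕ) (hn : 3 ≤ n) (D : Finset ℤ)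
    (hD : ∀ d ∈ D, 0 ≤ d ∧ d < (n : ℤ)) (h0 : (0 : ℤ) ∈ D) (hm : 2 ≤ D.card)
    (τ : ℕ → ℕ) (hτ : ∀ j, τ j < n)
    (hfin : ∀ k : ℕ, 0 < digitVal n τ - truncVal n τ k ∧
      digitVal n τ - truncVal n τ k < 1 / (n : ℝ) ^ k)
    (hσ : ∀ k : ℕ, sigmaFn n D τ k = 1 ∨ sigmaFn n D τ k = -1)
    (hne : (cantorC n D ∩ transl (cantorC n D) (digitVal n τ)).Nonempty) :
    ∀ k : ℕ,
      ∃ a : Fin (muFn n D τ k) → ℝ,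
        (∀ i j, i ≠ j →
          Disjoint
            (Set.Icc (a i) (a i + (if sigmaFn n D τ k = 1 then
              1 / (n : ℝ) ^ k - (digitVal n τ - truncVal n τ k)
              else digitVal n τ - truncVal n τ k)))
            (Set.Icc (a j) (a j + (if sigmaFn n D τ k = 1 then
              1 / (n : ℝ) ^ k - (digitVal n τ - truncVal n τ k)
              else digitVal n τ - truncVal n τ k)))) ∧
        cantorStage n D k ∩ transl (cantorStage n D k) (digitVal n τ) =
          ⋃ i : Fin (muFn n D τ k),
            Set.Icc (a i) (a i + (if sigmaFn n D τ k = 1 then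
              1 / (n : ℝ) ^ k - (digitVal n τ - truncVal n τ k)
              else digitVal n τ - truncVal n τ k)) := by
  intro k
  have hn0 : 0 < n := by omega
  have hp : (0:ℝ) < (n:ℝ)^k := by positivity
  obtain ⟨hε0, hεh⟩ := hfin k
  set t := digitVal n τ with htdef
  set ε := t - truncVal n τ k with hεdef
  have htrunc : truncVal n τ k = (Tval n τ k : ℝ) / (n:ℝ)^k := truncVal_eq hn0 τ k
  set T : ℝ := (Tval n τ k : ℝ) with hTdef
  have ht : t = T / (n:ℝ)^k + ε := by rw [hεdef, htrunc]; ring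
  have hεp : 0 < ε * (n:ℝ)^k := by positivity
  have hεp1 : ε * (n:ℝ)^k < 1 := (lt_div_iff₀ hp).mp hεh
  have hcnt := counting hn0 hD hτ hσ k
  rcases hσ k with hσ1 | hσ1
  · -- interval case
    obtain ⟨hAcard, hBempty⟩ := hcnt.1 hσ1
    have hif : (if sigmaFn n D τ k = 1 then 1 / (n:ℝ)^k - ε else ε) = 1/(n:ℝ)^k - ε :=
      if_pos hσ1
    set L : ℝ := 1/(n:ℝ)^k - ε with hLdef
    let e : Fin (muFn n D τ k) ≃ {x // x ∈ Afin n D τ k} :=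
      (finCongr hAcard.symm).trans (Afin n D τ k).equivFin.symm
    refine ⟨fun i => (((e i : ℤ) : ℝ)) / (n:ℝ)^k + ε, ?_, ?_⟩
    · intro i j hij
      rw [hif]
      have hNM : ((e i : ℤ)) ≠ ((e j : ℤ)) :=
        fun hc => hij (e.injective (Subtype.coe_injective hc))
      have key : ∀ N M : ℤ, N < M →
          Disjoint (Set.Icc ((N:ℝ)/(n:ℝ)^k + ε) ((N:ℝ)/(n:ℝ)^k + ε + L))
            (Set.Icc ((M:ℝ)/(n:ℝ)^k + ε) ((M:ℝ)/(n:ℝ)^k + ε + L)) := by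
        intro N M hlt
        rw [Set.disjoint_left]
        intro x hx1 hx2
        have hc1 : (N:ℝ) + 1 ≤ (M:ℝ) := by exact_mod_cast hlt
        have h1 : ((N:ℝ)+1)/(n:ℝ)^k ≤ (M:ℝ)/(n:ℝ)^k := by
          apply div_le_div_of_nonneg_right hc1 hp.le
        have h2 : ((N:ℝ)+1)/(n:ℝ)^k = (N:ℝ)/(n:ℝ)^k + 1/(n:ℝ)^k := by ring
        have hxa := hx1.2
        have hxb := hx2.1
        rw [hLdef] at hxa
        linarith
      rcases lt_or_gt_of_ne hNM with h | h
      · exact key _ _ h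
      · exact (key _ _ h).symm
    · rw [hif]
      ext x
      simp only [Set.mem_inter_iff, Set.mem_iUnion]
      constructor
      · rintro ⟨hx1, hx2⟩
        obtain ⟨y, hy, hxy⟩ := hx2
        obtain ⟨N, hN, hN1, hN2⟩ := (stage_mem_iff hn0).mp hx1
        obtain ⟨M, hM, hM1, hM2⟩ := (stage_mem_iff hn0).mp hy
        have hy' : y = x - t := by rw [hxy]; ring
        rw [div_le_iff₀ hp] at hN1 hM1
        have hN2' : x * (n:ℝ)^k ≤ (N:ℝ) + 1 := by
          rw [← le_div_iff₀ hp]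
          have h2 : ((N:ℝ)+1)/(n:ℝ)^k = (N:ℝ)/(n:ℝ)^k + 1/(n:ℝ)^k := by ring
          rw [h2]; exact hN2
        have hM2' : y * (n:ℝ)^k ≤ (M:ℝ) + 1 := by
          rw [← le_div_iff₀ hp]
          have h2 : ((M:ℝ)+1)/(n:ℝ)^k = (M:ℝ)/(n:ℝ)^k + 1/(n:ℝ)^k := by ring
          rw [h2]; exact hM2
        have htp : t * (n:ℝ)^k = T + ε * (n:ℝ)^k := by
          rw [ht]; field_simp
        have hyp : y * (n:ℝ)^k = x * (n:ℝ)^k - T - ε * (n:ℝ)^k := by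
          rw [hy', sub_mul, htp]; ring
        have hMT : M + Tval n τ k ≤ N ∧ N ≤ M + Tval n τ k + 1 := by
          constructor
          · have hr : (M:ℝ) + T < (N:ℝ) + 1 := by linarith
            have hr2 : ((M + Tval n τ k : ℤ) : ℝ) < ((N + 1 : ℤ) : ℝ) := by
              push_cast; rw [← hTdef]; linarith
            have hint : M + Tval n τ k < N + 1 := by exact_mod_cast hr2
            omega
          · have hr : (N:ℝ) < (M:ℝ) + T + 2 := by linarith
            have hr2 : ((N : ℤ) : ℝ) < ((M + Tval n τ k + 2 : ℤ) : ℝ) := by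
              push_cast; rw [← hTdef]; linarith
            have hint : N < M + Tval n τ k + 2 := by exact_mod_cast hr2
            omega
        rcases (by omega : N = M + Tval n τ k ∨ N = M + Tval n τ k + 1) with hs | hs
        · have hNA : N ∈ Afin n D τ k := by
            refine Finset.mem_filter.mpr ⟨hN, ?_⟩
            have h3 : N - Tval n τ k = M := by omega
            rw [h3]; exact hM
          refine ⟨e.symm ⟨N, hNA⟩, ?_⟩
          simp only [Equiv.apply_symm_apply]
          have hcast : (N:ℝ) = (M:ℝ) + T := by
            rw [hTdef]; exact_mod_cast congrArg (Int.cast : ℤ → ℝ) hs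
          constructor
          · rw [← sub_nonneg]
            have h4 : x - ((N:ℝ)/(n:ℝ)^k + ε) = (x * (n:ℝ)^k - ε * (n:ℝ)^k - (N:ℝ)) / (n:ℝ)^k := by
              field_simp; ring
            rw [h4]
            apply div_nonneg _ hp.le
            linarith
          · have h3 : x ≤ ((N:ℝ)+1)/(n:ℝ)^k := (le_div_iff₀ hp).mpr hN2'
            have h4 : ((N:ℝ)+1)/(n:ℝ)^k = (N:ℝ)/(n:ℝ)^k + ε + L := by rw [hLdef]; ring
            linarith
        · exfalso
          have hNB : N ∈ Bfin n D τ k := by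
            refine Finset.mem_filter.mpr ⟨hN, ?_⟩
            have h3 : N - Tval n τ k - 1 = M := by omega
            rw [h3]; exact hM
          rw [hBempty] at hNB
          exact Finset.notMem_empty N hNB
      · rintro ⟨i, hx⟩
        obtain ⟨hNmem, hNT⟩ := Finset.mem_filter.mp (e i).2
        obtain ⟨hx1, hx2⟩ := hx
        have hLx : ((e i : ℤ):ℝ)/(n:ℝ)^k + ε + L = ((e i : ℤ):ℝ)/(n:ℝ)^k + 1/(n:ℝ)^k := by
          rw [hLdef]; ring
        constructor
        · apply (stage_mem_iff hn0).mpr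
          exact ⟨(e i : ℤ), hNmem, by linarith, by linarith⟩
        · refine ⟨x - t, ?_, by ring⟩
          apply (stage_mem_iff hn0).mpr
          refine ⟨(e i : ℤ) - Tval n τ k, hNT, ?_, ?_⟩
          · have hc : (((e i : ℤ) - Tval n τ k : ℤ):ℝ)/(n:ℝ)^k =
                ((e i : ℤ):ℝ)/(n:ℝ)^k - T/(n:ℝ)^k := by
              rw [hTdef]; push_cast; rw [sub_div]
            rw [hc]
            linarith
          · have hc : (((e i : ℤ) - Tval n τ k : ℤ):ℝ)/(n:ℝ)^k =
                ((e i : ℤ):ℝ)/(n:ℝ)^k - T/(n:ℝ)^k := by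
              rw [hTdef]; push_cast; rw [sub_div]
            rw [hc]
            linarith
  · -- potential interval case
    obtain ⟨hBcard, hAempty⟩ := hcnt.2 hσ1
    have hif : (if sigmaFn n D τ k = 1 then 1 / (n:ℝ)^k - ε else ε) = ε := by
      rw [if_neg]; rw [hσ1]; norm_num
    let e : Fin (muFn n D τ k) ≃ {x // x ∈ Bfin n D τ k} :=
      (finCongr hBcard.symm).trans (Bfin n D τ k).equivFin.symm
    refine ⟨fun i => (((e i : ℤ) : ℝ)) / (n:ℝ)^k, ?_, ?_⟩
    · intro i j hij
      rw [hif]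
      have hNM : ((e i : ℤ)) ≠ ((e j : ℤ)) :=
        fun hc => hij (e.injective (Subtype.coe_injective hc))
      have key : ∀ N M : ℤ, N < M →
          Disjoint (Set.Icc ((N:ℝ)/(n:ℝ)^k) ((N:ℝ)/(n:ℝ)^k + ε))
            (Set.Icc ((M:ℝ)/(n:ℝ)^k) ((M:ℝ)/(n:ℝ)^k + ε)) := by
        intro N M hlt
        rw [Set.disjoint_left]
        intro x hx1 hx2
        have hc1 : (N:ℝ) + 1 ≤ (M:ℝ) := by exact_mod_cast hlt
        have h1 : ((N:ℝ)+1)/(n:ℝ)^k ≤ (M:ℝ)/(n:ℝ)^k := by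
          apply div_le_div_of_nonneg_right hc1 hp.le
        have h2 : ((N:ℝ)+1)/(n:ℝ)^k = (N:ℝ)/(n:ℝ)^k + 1/(n:ℝ)^k := by ring
        have hεlt : ε < 1/(n:ℝ)^k := hεh
        have hxa := hx1.2
        have hxb := hx2.1
        linarith
      rcases lt_or_gt_of_ne hNM with h | h
      · exact key _ _ h
      · exact (key _ _ h).symm
    · rw [hif]
      ext x
      simp only [Set.mem_inter_iff, Set.mem_iUnion]
      constructor
      · rintro ⟨hx1, hx2⟩
        obtain ⟨y, hy, hxy⟩ := hx2
        obtain ⟨N, hN, hN1, hN2⟩ := (stage_mem_iff hn0).mp hx1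
        obtain ⟨M, hM, hM1, hM2⟩ := (stage_mem_iff hn0).mp hy
        have hy' : y = x - t := by rw [hxy]; ring
        rw [div_le_iff₀ hp] at hN1 hM1
        have hN2' : x * (n:ℝ)^k ≤ (N:ℝ) + 1 := by
          rw [← le_div_iff₀ hp]
          have h2 : ((N:ℝ)+1)/(n:ℝ)^k = (N:ℝ)/(n:ℝ)^k + 1/(n:ℝ)^k := by ring
          rw [h2]; exact hN2
        have hM2' : y * (n:ℝ)^k ≤ (M:ℝ) + 1 := by
          rw [← le_div_iff₀ hp]
          have h2 : ((M:ℝ)+1)/(n:ℝ)^k = (M:ℝ)/(n:ℝ)^k + 1/(n:ℝ)^k := by ring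
          rw [h2]; exact hM2
        have htp : t * (n:ℝ)^k = T + ε * (n:ℝ)^k := by
          rw [ht]; field_simp
        have hyp : y * (n:ℝ)^k = x * (n:ℝ)^k - T - ε * (n:ℝ)^k := by
          rw [hy', sub_mul, htp]; ring
        have hMT : M + Tval n τ k ≤ N ∧ N ≤ M + Tval n τ k + 1 := by
          constructor
          · have hr : (M:ℝ) + T < (N:ℝ) + 1 := by linarith
            have hr2 : ((M + Tval n τ k : ℤ) : ℝ) < ((N + 1 : ℤ) : ℝ) := by
              push_cast; rw [← hTdef]; linarith
            have hint : M + Tval n τ k < N + 1 := by exact_mod_cast hr2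
            omega
          · have hr : (N:ℝ) < (M:ℝ) + T + 2 := by linarith
            have hr2 : ((N : ℤ) : ℝ) < ((M + Tval n τ k + 2 : ℤ) : ℝ) := by
              push_cast; rw [← hTdef]; linarith
            have hint : N < M + Tval n τ k + 2 := by exact_mod_cast hr2
            omega
        rcases (by omega : N = M + Tval n τ k ∨ N = M + Tval n τ k + 1) with hs | hs
        · exfalso
          have hNA : N ∈ Afin n D τ k := by
            refine Finset.mem_filter.mpr ⟨hN, ?_⟩
            have h3 : N - Tval n τ k = M := by omega
            rw [h3]; exact hM
          rw [hAempty] at hNA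
          exact Finset.notMem_empty N hNA
        · have hNB : N ∈ Bfin n D τ k := by
            refine Finset.mem_filter.mpr ⟨hN, ?_⟩
            have h3 : N - Tval n τ k - 1 = M := by omega
            rw [h3]; exact hM
          refine ⟨e.symm ⟨N, hNB⟩, ?_⟩
          simp only [Equiv.apply_symm_apply]
          have hcast : (N:ℝ) = (M:ℝ) + T + 1 := by
            rw [hTdef]
            have := congrArg (Int.cast : ℤ → ℝ) hs
            push_cast at this
            linarith
          constructor
          · exact (div_le_iff₀ hp).mpr hN1
          · rw [← sub_nonneg]
            have h4 : (N:ℝ)/(n:ℝ)^k + ε - x = ((N:ℝ) + ε * (n:ℝ)^k - x * (n:ℝ)^k) / (n:ℝ)^k := by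
              field_simp
            rw [h4]
            apply div_nonneg _ hp.le
            linarith
      · rintro ⟨i, hx⟩
        obtain ⟨hNmem, hNT⟩ := Finset.mem_filter.mp (e i).2
        obtain ⟨hx1, hx2⟩ := hx
        constructor
        · apply (stage_mem_iff hn0).mpr
          exact ⟨(e i : ℤ), hNmem, hx1, by linarith⟩
        · refine ⟨x - t, ?_, by ring⟩
          apply (stage_mem_iff hn0).mpr
          refine ⟨(e i : ℤ) - Tval n τ k - 1, hNT, ?_, ?_⟩
          · have hc : (((e i : ℤ) - Tval n τ k - 1 : ℤ):ℝ)/(n:ℝ)^k =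
                ((e i : ℤ):ℝ)/(n:ℝ)^k - T/(n:ℝ)^k - 1/(n:ℝ)^k := by
              rw [hTdef]; push_cast; rw [sub_div, sub_div]
            rw [hc]
            linarith
          · have hc : (((e i : ℤ) - Tval n τ k - 1 : ℤ):ℝ)/(n:ℝ)^k =
                ((e i : ℤ):ℝ)/(n:ℝ)^k - T/(n:ℝ)^k - 1/(n:ℝ)^k := by
              rw [hTdef]; push_cast; rw [sub_div, sub_div]
            rw [hc]
            linarith
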